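/- Generalization boundedness in constants form (Theorem 1 as stated in the main text): Under hypotheses (H1), (H2) and (H3), there exist constants C₁ ≥ 0 and C₂ ≥ 0 and real numbers c_t for t = 1,…,T such that for every index j ∈ {1,…,T}, ‖ψ₀• + ψⱼ•‖ ≤ sqrt( C₁ + C₂ · ∑_{t=1}^{T} |c_t − L_t(ψₜ*)| ); in particular one may take C₁ = λ₀‖ψ₀*‖²/λ̃, C₂ = 1/λ̃, and c_t = L_t(ψ₀*). -/

import Mathlib

open Finset

/-- After clearing the denominator this is `(a u - b v)² ≥ 0`. -/
lemma mul_div_add_mul_add_sq_le {a b : ℝ} (ha : 0 < a) (hb : 0 < b) (u v : ℝ) :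
    a * b / (a + b) * (u + v) ^ 2 ≤ a * u ^ 2 + b * v ^ 2 := by
  rw [div_mul_eq_mul_div, div_le_iff₀ (by positivity)]
  nlinarith [sq_nonneg (a * u - b * v)]

lemma mul_div_add_mul_norm_add_sq_le {E : Type*} [SeminormedAddGroup E] {a b : ℝ}
    (ha : 0 < a) (hb : 0 < b) (x y : E) :
    a * b / (a + b) * ‖x + y‖ ^ 2 ≤ a * ‖x‖ ^ 2 + b * ‖y‖ ^ 2 :=
  (mul_le_mul_of_nonneg_left (pow_le_pow_left₀ (norm_nonneg _) (norm_add_le x y) 2)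
    (by positivity)).trans (mul_div_add_mul_add_sq_le ha hb _ _)

/-- Test the optimality of the shared solution `(x₀, x)` against the universal one `y₀`, then trade
each loss `L t (x₀ + x t)` for the smaller stand-alone loss `L t (y t)`. -/
lemma mul_div_add_mul_norm_add_sq_le_sum_abs {ι E : Type*} [SeminormedAddGroup E]
    {s : Finset ι} {L : ι → E → ℝ} {a b : ℝ} (ha : 0 < a) (hb : 0 < b)
    {x₀ y₀ : E} {x y : ι → E}
    (hopt : ∑ t ∈ s, (L t (x₀ + x t) + b * ‖x t‖ ^ 2) + a * ‖x₀‖ ^ 2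
      ≤ ∑ t ∈ s, L t y₀ + a * ‖y₀‖ ^ 2)
    (hloss : ∀ t ∈ s, L t (y t) ≤ L t (x₀ + x t)) {j : ι} (hj : j ∈ s) :
    a * b / (a + b) * ‖x₀ + x j‖ ^ 2 ≤ a * ‖y₀‖ ^ 2 + ∑ t ∈ s, |L t y₀ - L t (y t)| := by
  have hloss_sum : ∑ t ∈ s, L t (y t) ≤ ∑ t ∈ s, L t (x₀ + x t) := sum_le_sum hloss
  have hsingle : b * ‖x j‖ ^ 2 ≤ ∑ t ∈ s, b * ‖x t‖ ^ 2 :=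
    single_le_sum (f := fun t => b * ‖x t‖ ^ 2) (fun t _ => by positivity) hj
  rw [sum_add_distrib] at hopt
  calc a * b / (a + b) * ‖x₀ + x j‖ ^ 2
      ≤ a * ‖x₀‖ ^ 2 + b * ‖x j‖ ^ 2 := mul_div_add_mul_norm_add_sq_le ha hb _ _
    _ ≤ a * ‖y₀‖ ^ 2 + ∑ t ∈ s, (L t y₀ - L t (y t)) := by rw [sum_sub_distrib]; linarith
    _ ≤ a * ‖y₀‖ ^ 2 + ∑ t ∈ s, |L t y₀ - L t (y t)| := by
      gcongr with t
      exact le_abs_self _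

theorem generalization_boundedness_constants_general
    {V : Type*} [NormedAddCommGroup V] [InnerProductSpace ℝ V]
    (T : ℕ)
    (L : ℕ → V → ℝ)
    (l0 l : ℝ) (hl0 : 0 < l0) (hl : 0 < l)
    (ψ₀dot : V) (ψdot : ℕ → V) (ψ₀star : V) (ψstar : ℕ → V)
    (H1 : ∑ t ∈ Finset.Icc 1 T, (L t (ψ₀dot + ψdot t) + l * ‖ψdot t‖ ^ 2)
            + l0 * ‖ψ₀dot‖ ^ 2
          ≤ ∑ t ∈ Finset.Icc 1 T, L t ψ₀star + l0 * ‖ψ₀star‖ ^ 2)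
    (H3 : ∀ t ∈ Finset.Icc 1 T, L t (ψstar t) ≤ L t (ψ₀dot + ψdot t)) :
    ∃ C₁ C₂ : ℝ, 0 ≤ C₁ ∧ 0 ≤ C₂ ∧ ∃ c : ℕ → ℝ,
      C₁ = l0 * ‖ψ₀star‖ ^ 2 / (l0 * l / (l0 + l)) ∧
      C₂ = 1 / (l0 * l / (l0 + l)) ∧
      (∀ t ∈ Finset.Icc 1 T, c t = L t ψ₀star) ∧
      ∀ j ∈ Finset.Icc 1 T,
        ‖ψ₀dot + ψdot j‖
          ≤ Real.sqrt (C₁ + C₂ * ∑ t ∈ Finset.Icc 1 T, |c t - L t (ψstar t)|) := by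
  have hl_tilde : 0 < l0 * l / (l0 + l) := by positivity
  refine ⟨_, _, by positivity, by positivity, fun t => L t ψ₀star, rfl, rfl, fun _ _ => rfl,
    fun j hj => ?_⟩
  have key := mul_div_add_mul_norm_add_sq_le_sum_abs hl0 hl H1 H3 hj
  have hS : 0 ≤ ∑ t ∈ Icc 1 T, |L t ψ₀star - L t (ψstar t)| := sum_nonneg fun _ _ => abs_nonneg _
  rw [Real.le_sqrt (norm_nonneg _) (by positivity), one_div_mul_eq_div, ← add_div,
    le_div_iff₀ hl_tilde]
  linarith

/-- Generalization boundedness in constants form (Theorem 1 as stated in the main text). -/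
theorem generalization_boundedness_constants
    {V : Type*} [NormedAddCommGroup V] [InnerProductSpace ℝ V]
    (T : ℕ) (hT : 1 ≤ T)
    (L : ℕ → V → ℝ) (hL : ∀ t ∈ Finset.Icc 1 T, ∀ ψ : V, 0 ≤ L t ψ)
    (l0 l : ℝ) (hl0 : 0 < l0) (hl : 0 < l)
    (ψ₀dot : V) (ψdot : ℕ → V) (ψ₀star : V) (ψstar : ℕ → V)
    (H1 : ∑ t ∈ Finset.Icc 1 T, (L t (ψ₀dot + ψdot t) + l * ‖ψdot t‖ ^ 2)
            + l0 * ‖ψ₀dot‖ ^ 2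
          ≤ ∑ t ∈ Finset.Icc 1 T, L t ψ₀star + l0 * ‖ψ₀star‖ ^ 2)
    (H2 : ∀ t ∈ Finset.Icc 1 T, ∀ ψ : V,
            L t (ψstar t) + (l0 * l / (l0 + l)) * ‖ψstar t‖ ^ 2
          ≤ L t ψ + (l0 * l / (l0 + l)) * ‖ψ‖ ^ 2)
    (H3 : ∀ t ∈ Finset.Icc 1 T, L t (ψstar t) ≤ L t (ψ₀dot + ψdot t)) :
    ∃ C₁ C₂ : ℝ, 0 ≤ C₁ ∧ 0 ≤ C₂ ∧ ∃ c : ℕ → ℝ,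
      C₁ = l0 * ‖ψ₀star‖ ^ 2 / (l0 * l / (l0 + l)) ∧
      C₂ = 1 / (l0 * l / (l0 + l)) ∧
      (∀ t ∈ Finset.Icc 1 T, c t = L t ψ₀star) ∧
      ∀ j ∈ Finset.Icc 1 T,
        ‖ψ₀dot + ψdot j‖
          ≤ Real.sqrt (C₁ + C₂ * ∑ t ∈ Finset.Icc 1 T, |c t - L t (ψstar t)|) :=
  generalization_boundedness_constants_general T L l0 l hl0 hl ψ₀dot ψdot ψ₀star ψstar H1 H3
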